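/- In the Hahn series field F = HahnSeries ℝ ℝ, the tempered powers compose: for every a ∈ F⁺ = {x : x ≠ 0, 0 < leadingCoeff x} and all γ, γ' ∈ ℝ, the element tp a γ again lies in F⁺ and tp (tp a γ) γ' = tp a (γ·γ'). -/

import Mathlib

open HahnSeries

/-- The exponential summable family `n ↦ (n!)⁻¹ • bⁿ` of an element `b` of positive
order in the Hahn series field. -/
noncomputable def expFamily (b : HahnSeries ℝ ℝ) (hb : 0 < b.orderTop) :
    SummableFamily ℝ ℝ ℕ where
  toFun n := ((n.factorial : ℝ))⁻¹ • b ^ n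
  isPWO_iUnion_support' := by
    refine (SummableFamily.powers b).isPWO_iUnion_support.mono ?_
    intro g hg
    obtain ⟨n, hn⟩ := Set.mem_iUnion.mp hg
    refine Set.mem_iUnion.mpr ⟨n, ?_⟩
    have hn' : (((n.factorial : ℝ))⁻¹ • b ^ n).coeff g ≠ 0 := hn
    have hbn : (b ^ n).coeff g ≠ 0 := fun h => hn' (by rw [HahnSeries.coeff_smul, h, smul_zero])
    show ((if 0 < b.orderTop then b else 0) ^ n).coeff g ≠ 0
    rw [if_pos hb]
    exact hbn
  finite_co_support' g := by
    refine ((SummableFamily.powers b).finite_co_support g).subset ?_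
    intro n hn
    simp only [Set.mem_setOf_eq] at hn ⊢
    intro h
    apply hn
    rw [HahnSeries.coeff_smul]
    have h' : (b ^ n).coeff g = 0 := by
      have h2 : ((if 0 < b.orderTop then b else 0) ^ n).coeff g = 0 := h
      rwa [if_pos hb] at h2
    rw [h', smul_zero]

/-- The restricted exponential on the maximal ideal of the valuation ring:
`E b = ∑_{n} (n!)⁻¹ bⁿ` when `0 < orderTop b`, and (junk value) `0` otherwise. -/
noncomputable def E (b : HahnSeries ℝ ℝ) : HahnSeries ℝ ℝ :=
  if hb : 0 < b.orderTop then (expFamily b hb).hsum else 0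

/-- The exponential on the valuation ring `O = {x : 0 ≤ orderTop x}`, combining the
real exponential on the constant term with the restricted exponential `E`. -/
noncomputable def expO (a : HahnSeries ℝ ℝ) : HahnSeries ℝ ℝ :=
  HahnSeries.single (0 : ℝ) (Real.exp (a.coeff 0)) *
    E (a - HahnSeries.single (0 : ℝ) (a.coeff 0))

/-- The logarithm on positive units: the inverse of the bijection `expO : O → U⁺`. -/
noncomputable def logO (x : HahnSeries ℝ ℝ) : HahnSeries ℝ ℝ :=
  Function.invFunOn expO {a : HahnSeries ℝ ℝ | 0 ≤ a.orderTop} x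

/-- The power `b ^ c = expO (c · logO b)` for `b ∈ U⁺` and `c ∈ O`. -/
noncomputable def hpow (b c : HahnSeries ℝ ℝ) : HahnSeries ℝ ℝ :=
  expO (c * logO b)

/-- Membership in the group `U⁺` of positive units of the valuation ring. -/
def memUplus (x : HahnSeries ℝ ℝ) : Prop :=
  x ≠ 0 ∧ x.order = 0 ∧ 0 < x.leadingCoeff

/-- The signed valuation on the Hahn series field `HahnSeries ℝ ℝ`. -/
noncomputable def vv (x : HahnSeries ℝ ℝ) : ℝ :=
  Real.sign x.leadingCoeff * Real.exp (-x.order)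

/-- The diagonal cross-section `π : ℝ^× → HahnSeries ℝ ℝ`. -/
noncomputable def diagPi (a : ℝ) : HahnSeries ℝ ℝ :=
  HahnSeries.single (-Real.log |a|) a

/-- The tempered power `a^γ = π((vv a)^γ) · (a / π(vv a))^{single 0 γ}`, for `a ∈ F⁺`
and `γ ∈ ℝ`, where `(vv a)^γ` is the real power `Real.rpow`. -/
noncomputable def tp (a : HahnSeries ℝ ℝ) (γ : ℝ) : HahnSeries ℝ ℝ :=
  diagPi ((vv a) ^ γ) * hpow (a / diagPi (vv a)) (HahnSeries.single (0 : ℝ) γ)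

/-! The tempered power splits `a ∈ F⁺` as `π(vv a) · b` with `b ∈ U⁺` and acts on the two
factors separately: by the real power on the first and by `b ↦ b ^ single 0 γ` on the second,
and both compose multiplicatively in the exponent. On `U⁺` this rests on `expO : O → U⁺` being
a bijection. As `expO (single 0 r + u) = single 0 (eʳ) · E u`, that comes down to `E` mapping the
series of positive order bijectively onto `1 +` those series; both inverse identities follow by
evaluating the compositional inverse of `exp - 1` through `heval`, which commutes with
substitution. -/

namespace PowerSeries

open SummableFamily

variable {Γ R : Type*} [AddCommMonoid Γ] [LinearOrder Γ] [IsOrderedCancelAddMonoid Γ]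
  [CommRing R] {x : R⟦Γ⟧}

theorem coeff_heval_eq_sum (hx : 0 < x.orderTop) (f : R⟦X⟧) {g : Γ} {s : Finset ℕ}
    (hs : {n | (x ^ n).coeff g ≠ 0} ⊆ s) :
    (heval x f).coeff g = ∑ n ∈ s, coeff n f * (x ^ n).coeff g := by
  rw [heval_apply, coeff_hsum_eq_sum_of_subset (t := s)]
  · simp [powers_of_orderTop_pos hx]
  · refine fun n hn => hs fun hxn => hn ?_
    simp [powers_of_orderTop_pos hx, hxn]

theorem orderTop_le_orderTop_heval (hx : 0 < x.orderTop) {q : R⟦X⟧} (hq : constantCoeff q = 0) :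
    x.orderTop ≤ (heval x q).orderTop := by
  refine le_orderTop_iff_forall.mpr fun j hj => ?_
  rw [coeff_heval, finsum_eq_zero_of_forall_eq_zero fun n => ?_]
  rcases eq_or_ne n 0 with rfl | hn
  · simp [hq]
  · simp only [coeff_apply, smulFamily_toFun, powers_of_orderTop_pos hx, HahnSeries.coeff_smul]
    refine smul_eq_zero_of_right _ (coeff_eq_zero_of_lt_orderTop ?_)
    calc (j : WithTop Γ) < x.orderTop := hj
      _ ≤ n • x.orderTop := le_smul_of_one_le_left hx.le (Nat.one_le_iff_ne_zero.mpr hn)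
      _ ≤ (x ^ n).orderTop := orderTop_nsmul_le_orderTop_pow

theorem heval_heval (hx : 0 < x.orderTop) {q : R⟦X⟧} (hq : constantCoeff q = 0) (f : R⟦X⟧) :
    heval (heval x q) f = heval x (f.subst q) := by
  ext g
  set s := (pow_finite_co_support hx g).toFinset
  set N := s.sup id
  have hs : {m | (x ^ m).coeff g ≠ 0} ⊆ s := fun m hm => (Set.Finite.mem_toFinset _).mpr hm
  have hq_pow : ∀ m ∈ s, ∀ n, N < n → coeff m (q ^ n) = 0 := fun m hm n hn =>
    coeff_of_lt_order _ ((Nat.cast_lt.mpr ((Finset.le_sup (f := id) hm).trans_lt hn)).trans_le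
      (le_order_pow_of_constantCoeff_eq_zero n hq))
  have hy_pow : ∀ n, (heval x q ^ n).coeff g = ∑ m ∈ s, coeff m (q ^ n) * (x ^ m).coeff g :=
    fun n => by rw [← map_pow, coeff_heval_eq_sum hx _ hs]
  have hsubst : ∀ m ∈ s,
      coeff m (f.subst q) = ∑ n ∈ Finset.range (N + 1), coeff n f * coeff m (q ^ n) := by
    intro m hm
    rw [coeff_subst' (HasSubst.of_constantCoeff_zero' hq)]
    refine finsum_eq_sum_of_support_subset _ fun n hn => ?_
    by_contra hN
    simp_all [hq_pow m hm n (by simpa using hN)]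
  rw [coeff_heval_eq_sum (hx.trans_le (orderTop_le_orderTop_heval hx hq)) f
      (s := Finset.range (N + 1)), coeff_heval_eq_sum hx _ hs]
  · simp_rw [hy_pow, Finset.mul_sum]
    rw [Finset.sum_comm]
    refine Finset.sum_congr rfl fun m hm => ?_
    rw [hsubst m hm, Finset.sum_mul]
    exact Finset.sum_congr rfl fun n _ => (mul_assoc _ _ _).symm
  · intro n hn
    by_contra hN
    refine hn ?_
    rw [hy_pow]
    exact Finset.sum_eq_zero fun m hm => by simp [hq_pow m hm n (by simpa using hN)]

end PowerSeries

namespace HahnSeries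

theorem orderTop_mul_nonneg {Γ R : Type*} [AddCommMonoid Γ] [LinearOrder Γ]
    [IsOrderedCancelAddMonoid Γ] [NonUnitalNonAssocSemiring R] {x y : R⟦Γ⟧}
    (hx : 0 ≤ x.orderTop) (hy : 0 ≤ y.orderTop) : 0 ≤ (x * y).orderTop :=
  (add_nonneg hx hy).trans orderTop_add_le_mul

variable {Γ R : Type*} [Zero Γ] [LinearOrder Γ] [AddGroup R]

theorem orderTop_sub_single_coeff_zero_pos {a : R⟦Γ⟧} (ha : 0 ≤ a.orderTop) :
    0 < (a - single 0 (a.coeff 0)).orderTop := by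
  set d := a - single 0 (a.coeff 0)
  have hd_nonneg : 0 ≤ d.orderTop := le_orderTop_iff_forall.mpr fun j hj => by
    simp [d, coeff_eq_zero_of_lt_orderTop (hj.trans_le ha), (WithTop.coe_lt_coe.mp hj).ne]
  refine hd_nonneg.lt_of_ne fun hd => coeff_orderTop_ne hd.symm ?_
  simp [d]

end HahnSeries

open HahnSeries PowerSeries

theorem constantCoeff_exp_sub_one : constantCoeff (exp ℝ - 1) = 0 := by
  simp [constantCoeff_exp]

theorem isUnit_coeff_one_exp_sub_one : IsUnit (coeff 1 (exp ℝ - 1)) := by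
  simp [coeff_exp]

/-- The compositional inverse of `exp - 1`, that is, the series of `log (1 + X)`. -/
noncomputable def logSeries : PowerSeries ℝ :=
  (exp ℝ - 1).substInvOfIsUnit isUnit_coeff_one_exp_sub_one

theorem constantCoeff_logSeries : constantCoeff logSeries = 0 :=
  constantCoeff_substInvOfIsUnit _ _

section E

variable {b : HahnSeries ℝ ℝ}

theorem E_eq_heval (hb : 0 < b.orderTop) : E b = heval b (exp ℝ) := by
  rw [E, dif_pos hb, heval_apply]
  congr 1
  ext n g
  simp [expFamily, hb, coeff_exp]

theorem E_sub_one_eq_heval (hb : 0 < b.orderTop) : E b - 1 = heval b (exp ℝ - 1) := by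
  rw [map_sub, map_one, E_eq_heval hb]

theorem orderTop_E_sub_one_pos (hb : 0 < b.orderTop) : 0 < (E b - 1).orderTop := by
  rw [E_sub_one_eq_heval hb]
  exact hb.trans_le (orderTop_le_orderTop_heval hb constantCoeff_exp_sub_one)

theorem heval_E_sub_one_logSeries (hb : 0 < b.orderTop) : heval (E b - 1) logSeries = b := by
  rw [E_sub_one_eq_heval hb, heval_heval hb constantCoeff_exp_sub_one, logSeries,
    subst_substInvOfIsUnit_left _ constantCoeff_exp_sub_one, heval_X _ hb]

theorem E_heval_logSeries {ε : HahnSeries ℝ ℝ} (hε : 0 < ε.orderTop) :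
    E (heval ε logSeries) = 1 + ε := by
  have hu : 0 < (heval ε logSeries).orderTop :=
    hε.trans_le (orderTop_le_orderTop_heval hε constantCoeff_logSeries)
  rw [← sub_eq_iff_eq_add', E_sub_one_eq_heval hu,
    heval_heval hε constantCoeff_logSeries, logSeries,
    subst_substInvOfIsUnit_right _ constantCoeff_exp_sub_one, heval_X _ hε]

end E

theorem memUplus_iff {x : HahnSeries ℝ ℝ} :
    memUplus x ↔ x.orderTop = 0 ∧ 0 < x.leadingCoeff := by
  rw [memUplus, ← and_assoc]
  refine and_congr_left' ⟨fun ⟨hx, ho⟩ => ?_, fun h => ?_⟩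
  · rw [orderTop_of_ne_zero hx, ← order_of_ne hx, ho, WithTop.coe_zero]
  · have hx : x ≠ 0 := orderTop_ne_top.mp (h ▸ WithTop.zero_ne_top)
    exact ⟨hx, WithTop.coe_eq_zero.mp (h ▸ (order_eq_orderTop_of_ne_zero hx))⟩

theorem memUplus_single_zero_mul {c : ℝ} (hc : 0 < c) {z : HahnSeries ℝ ℝ}
    (hz : 0 < (z - 1).orderTop) : memUplus (single 0 c * z) := by
  obtain ⟨hzo, hzl⟩ := (orderTop_self_sub_one_pos_iff z).mp hz
  rw [memUplus_iff, orderTop_mul, leadingCoeff_mul, orderTop_single hc.ne', hzo, hzl,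
    leadingCoeff_of_single, mul_one, add_zero]
  exact ⟨rfl, hc⟩

theorem expO_single_zero_add {r : ℝ} {u : HahnSeries ℝ ℝ} (hu : 0 < u.orderTop) :
    expO (single 0 r + u) = single 0 (Real.exp r) * E u := by
  have hu0 : u.coeff 0 = 0 := coeff_eq_zero_of_lt_orderTop hu
  rw [expO, coeff_add, coeff_single_same, hu0, add_zero, add_sub_cancel_left]

theorem eq_single_zero_add {a : HahnSeries ℝ ℝ} (ha : 0 ≤ a.orderTop) :
    ∃ r u, 0 < u.orderTop ∧ a = single 0 r + u :=
  ⟨a.coeff 0, _, orderTop_sub_single_coeff_zero_pos ha, (add_sub_cancel _ _).symm⟩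

theorem memUplus_expO {a : HahnSeries ℝ ℝ} (ha : 0 ≤ a.orderTop) : memUplus (expO a) := by
  obtain ⟨r, u, hu, rfl⟩ := eq_single_zero_add ha
  rw [expO_single_zero_add hu]
  exact memUplus_single_zero_mul (Real.exp_pos r) (orderTop_E_sub_one_pos hu)

theorem expO_injOn : Set.InjOn expO {a : HahnSeries ℝ ℝ | 0 ≤ a.orderTop} := by
  intro a₁ ha₁ a₂ ha₂ h
  obtain ⟨r₁, u₁, hu₁, rfl⟩ := eq_single_zero_add ha₁
  obtain ⟨r₂, u₂, hu₂, rfl⟩ := eq_single_zero_add ha₂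
  rw [expO_single_zero_add hu₁, expO_single_zero_add hu₂] at h
  have hlc := congrArg leadingCoeff h
  rw [leadingCoeff_mul, leadingCoeff_mul, leadingCoeff_of_single, leadingCoeff_of_single,
    ((orderTop_self_sub_one_pos_iff _).mp (orderTop_E_sub_one_pos hu₁)).2,
    ((orderTop_self_sub_one_pos_iff _).mp (orderTop_E_sub_one_pos hu₂)).2, mul_one, mul_one,
    Real.exp_eq_exp] at hlc
  subst hlc
  have hE := mul_left_cancel₀ (single_ne_zero (Real.exp_pos r₁).ne') h
  rw [← heval_E_sub_one_logSeries hu₁, ← heval_E_sub_one_logSeries hu₂, hE]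

theorem expO_surjOn :
    Set.SurjOn expO {a : HahnSeries ℝ ℝ | 0 ≤ a.orderTop} {y | memUplus y} := by
  intro y hy
  obtain ⟨hyo, hyl⟩ := memUplus_iff.mp hy
  set c := y.leadingCoeff
  set z := single 0 c⁻¹ * y
  have hz : 0 < (z - 1).orderTop := by
    rw [orderTop_self_sub_one_pos_iff, orderTop_mul, leadingCoeff_mul, orderTop_single
      (inv_ne_zero hyl.ne'), hyo, leadingCoeff_of_single, inv_mul_cancel₀ hyl.ne']
    exact ⟨add_zero 0, rfl⟩
  set u := heval (z - 1) logSeries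
  have hu : 0 < u.orderTop :=
    hz.trans_le (orderTop_le_orderTop_heval hz constantCoeff_logSeries)
  refine ⟨single 0 (Real.log c) + u, ?_, ?_⟩
  · exact le_min orderTop_single_le hu.le |>.trans min_orderTop_le_orderTop_add
  · rw [expO_single_zero_add hu, E_heval_logSeries hz, add_sub_cancel,
      Real.exp_log hyl, ← mul_assoc, single_mul_single, mul_inv_cancel₀ hyl.ne', add_zero,
      single_zero_one, one_mul]

section logO

variable {y : HahnSeries ℝ ℝ}

theorem orderTop_logO_nonneg (hy : memUplus y) : 0 ≤ (logO y).orderTop :=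
  expO_surjOn.mapsTo_invFunOn hy

theorem logO_expO {a : HahnSeries ℝ ℝ} (ha : 0 ≤ a.orderTop) : logO (expO a) = a :=
  expO_injOn.leftInvOn_invFunOn ha

end logO

section hpow

variable {b c c' : HahnSeries ℝ ℝ}

theorem memUplus_hpow (hb : memUplus b) (hc : 0 ≤ c.orderTop) : memUplus (hpow b c) :=
  memUplus_expO (orderTop_mul_nonneg hc (orderTop_logO_nonneg hb))

theorem hpow_hpow (hb : memUplus b) (hc : 0 ≤ c.orderTop) :
    hpow (hpow b c) c' = hpow b (c' * c) := by
  rw [hpow, hpow, hpow, logO_expO (orderTop_mul_nonneg hc (orderTop_logO_nonneg hb)), mul_assoc]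

end hpow

section tp

variable {a w : HahnSeries ℝ ℝ} {r : ℝ}

theorem vv_of_leadingCoeff_pos (hla : 0 < a.leadingCoeff) : vv a = Real.exp (-a.order) := by
  rw [vv, Real.sign_of_pos hla, one_mul]

theorem vv_pos (hla : 0 < a.leadingCoeff) : 0 < vv a :=
  vv_of_leadingCoeff_pos hla ▸ Real.exp_pos _

theorem memUplus_div_diagPi_vv (ha : a ≠ 0) (hla : 0 < a.leadingCoeff) :
    memUplus (a / diagPi (vv a)) := by
  have hv := vv_pos hla
  have hπ : diagPi (vv a) = single a.order (vv a) := by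
    rw [diagPi, abs_of_pos hv, vv_of_leadingCoeff_pos hla, Real.log_exp, neg_neg]
  rw [memUplus_iff, hπ, div_eq_mul_inv, inv_single, orderTop_mul, leadingCoeff_mul,
    orderTop_single (inv_ne_zero hv.ne'), ← order_eq_orderTop_of_ne_zero ha,
    leadingCoeff_of_single, ← WithTop.coe_add, add_neg_cancel]
  exact ⟨rfl, mul_pos hla (inv_pos.mpr hv)⟩

theorem diagPi_mul_ne_zero (hr : 0 < r) (hw : memUplus w) : diagPi r * w ≠ 0 :=
  mul_ne_zero (single_ne_zero hr.ne') hw.1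

theorem leadingCoeff_diagPi_mul_pos (hr : 0 < r) (hw : memUplus w) :
    0 < (diagPi r * w).leadingCoeff := by
  rw [leadingCoeff_mul, diagPi, leadingCoeff_of_single]
  exact mul_pos hr hw.2.2

theorem vv_diagPi_mul (hr : 0 < r) (hw : memUplus w) : vv (diagPi r * w) = r := by
  rw [vv_of_leadingCoeff_pos (leadingCoeff_diagPi_mul_pos hr hw), diagPi,
    order_mul (single_ne_zero hr.ne') hw.1, hw.2.1, order_single hr.ne', abs_of_pos hr,
    add_zero, neg_neg, Real.exp_log hr]

theorem tp_diagPi_mul (hr : 0 < r) (hw : memUplus w) (γ : ℝ) :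
    tp (diagPi r * w) γ = diagPi (r ^ γ) * hpow w (single 0 γ) := by
  rw [tp, vv_diagPi_mul hr hw, mul_div_cancel_left₀ _ (single_ne_zero hr.ne')]

end tp

theorem stmt_13 (a : HahnSeries ℝ ℝ) (ha : a ≠ 0) (hla : 0 < a.leadingCoeff)
    (γ γ' : ℝ) :
    (tp a γ ≠ 0 ∧ 0 < (tp a γ).leadingCoeff) ∧ tp (tp a γ) γ' = tp a (γ * γ') := by
  have hb := memUplus_div_diagPi_vv ha hla
  have hv := vv_pos hla
  have hr : 0 < vv a ^ γ := Real.rpow_pos_of_pos hv γ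
  have hγ : 0 ≤ (single (0 : ℝ) γ).orderTop := orderTop_single_le
  have hw := memUplus_hpow hb hγ
  have htp : tp a γ = diagPi (vv a ^ γ) * hpow (a / diagPi (vv a)) (single 0 γ) := rfl
  rw [htp]
  refine ⟨⟨diagPi_mul_ne_zero hr hw, leadingCoeff_diagPi_mul_pos hr hw⟩, ?_⟩
  rw [tp_diagPi_mul hr hw, hpow_hpow hb hγ, single_mul_single,
    add_zero, ← Real.rpow_mul hv.le, mul_comm γ' γ, tp]
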